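/- arXiv:1707.09628 — 2 statements merged into one kernel-verified Lean document; each statement's English description precedes it below -/
import Mathlib

section
/- Let ρ = (ρ_t)_{t∈[0,1]} be a Bessel bridge of dimension δ = 4/3 from 0 to 0. Then ∫_0^1 E[ρ_t^{-2/3}] dt < ∞. -/
/-!
For `t ∈ (0,1)` put `s = t(1-t)`. The substitution behind `Real.Gamma` turns the `x`-integral
into an explicit Gaussian moment, `E[ρ_t^{-2/3}] = C 2^{-2/3} Γ(1/3) (t(1-t))^{-1/3}`, and
`∫_0^1 t^{-1/3} (1-t)^{-1/3} dt` is the Beta integral `B(2/3, 2/3) < ∞`.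
-/

open MeasureTheory Real Set ProbabilityTheory

lemma integral_rpow_mul_exp_neg_sq_div {q s : ℝ} (hq : -1 < q) (hs : 0 < s) :
    ∫ x in Ioi (0 : ℝ), x ^ q * exp (-(x ^ 2) / (2 * s))
      = (2 * s) ^ ((q + 1) / 2) * Gamma ((q + 1) / 2) / 2 := by
  have hb : 0 < (2 * s)⁻¹ := by positivity
  calc ∫ x in Ioi (0 : ℝ), x ^ q * exp (-(x ^ 2) / (2 * s))
      = ∫ x in Ioi (0 : ℝ), x ^ q * exp (-(2 * s)⁻¹ * x ^ (2 : ℝ)) := by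
        refine setIntegral_congr_fun measurableSet_Ioi fun x _ => ?_
        rw [rpow_two, neg_div, neg_mul, div_eq_inv_mul]
    _ = ((2 * s)⁻¹) ^ (-(q + 1) / 2) * (1 / 2) * Gamma ((q + 1) / 2) :=
        integral_rpow_mul_exp_neg_mul_rpow two_pos hq hb
    _ = (2 * s) ^ ((q + 1) / 2) * Gamma ((q + 1) / 2) / 2 := by
        rw [inv_rpow (by positivity), ← rpow_neg (by positivity), neg_div, neg_neg]
        ring

lemma lintegral_rpow_mul_besselBridgeDensity {p δ s C : ℝ} (hpδ : 0 < p + δ) (hs : 0 < s)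
    (hC : 0 ≤ C) :
    ∫⁻ x in Ioi (0 : ℝ), ENNReal.ofReal (x ^ p *
        (C * x ^ (δ - 1) * s ^ (-δ / 2) * exp (-(x ^ 2) / (2 * s))))
      = ENNReal.ofReal (C * 2 ^ ((p + δ) / 2 - 1) * Gamma ((p + δ) / 2) * s ^ (p / 2)) := by
  have hq : -1 < p + δ - 1 := by linarith
  have hfactor : ∀ x ∈ Ioi (0 : ℝ),
      x ^ p * (C * x ^ (δ - 1) * s ^ (-δ / 2) * exp (-(x ^ 2) / (2 * s)))
        = C * s ^ (-δ / 2) * (x ^ (p + δ - 1) * exp (-(x ^ 2) / (2 * s))) := by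
    intro x hx
    rw [add_sub_assoc, rpow_add hx]
    ring
  have hint : IntegrableOn (fun x : ℝ => x ^ (p + δ - 1) * exp (-(x ^ 2) / (2 * s))) (Ioi 0) := by
    have := integrableOn_rpow_mul_exp_neg_mul_sq (inv_pos.2 (mul_pos two_pos hs)) hq
    refine this.congr_fun (fun x _ => ?_) measurableSet_Ioi
    dsimp only
    congr 2
    ring
  rw [setLIntegral_congr_fun measurableSet_Ioi fun x hx => congrArg ENNReal.ofReal (hfactor x hx),
    ← ofReal_integral_eq_lintegral_ofReal (hint.const_mul _), integral_const_mul,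
    integral_rpow_mul_exp_neg_sq_div hq hs]
  · congr 1
    rw [sub_add_cancel, mul_rpow two_pos.le hs.le, rpow_sub_one two_ne_zero]
    have hexp : s ^ (-δ / 2) * s ^ ((p + δ) / 2) = s ^ (p / 2) := by
      rw [← rpow_add hs]; ring_nf
    rw [← hexp]
    ring
  · filter_upwards [ae_restrict_mem measurableSet_Ioi] with x hx
    have : (0 : ℝ) < x := hx
    positivity

lemma lintegral_rpow_mul_one_sub_rpow {α β : ℝ} (hα : 0 < α) (hβ : 0 < β) :
    ∫⁻ x in Ioo (0 : ℝ) 1, ENNReal.ofReal (x ^ (α - 1) * (1 - x) ^ (β - 1))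
      = ENNReal.ofReal (beta α β) := by
  have hB := beta_pos hα hβ
  have hone := lintegral_betaPDF_eq_one hα hβ
  simp_rw [lintegral_betaPDF, mul_assoc, ENNReal.ofReal_mul (one_div_pos.2 hB).le] at hone
  rw [lintegral_const_mul' _ _ ENNReal.ofReal_ne_top] at hone
  calc _ = ENNReal.ofReal (beta α β * (1 / beta α β)) * ∫⁻ x in Ioo (0 : ℝ) 1,
          ENNReal.ofReal (x ^ (α - 1) * (1 - x) ^ (β - 1)) := by
        rw [mul_one_div_cancel hB.ne', ENNReal.ofReal_one, one_mul]
    _ = ENNReal.ofReal (beta α β) := by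
        rw [ENNReal.ofReal_mul hB.le, mul_assoc, hone, mul_one]

theorem stmt9_general {Ω : Type*} [MeasurableSpace Ω] (μ : Measure Ω)
    (ρ : ℝ → Ω → ℝ) (C : ℝ) (hC : 0 < C)
    (hdens : ∀ t ∈ Set.Ioo (0 : ℝ) 1,
      ∫⁻ ω, ENNReal.ofReal ((ρ t ω) ^ (-(2 : ℝ) / 3)) ∂μ
        = ∫⁻ x in Set.Ioi (0 : ℝ), ENNReal.ofReal (x ^ (-(2 : ℝ) / 3) *
            (C * x ^ ((4 : ℝ) / 3 - 1) * (t * (1 - t)) ^ (-(2 : ℝ) / 3) *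
              Real.exp (-(x ^ 2) / (2 * (t * (1 - t)))))) ) :
    ∫⁻ t in Set.Ioo (0 : ℝ) 1, (∫⁻ ω, ENNReal.ofReal ((ρ t ω) ^ (-(2 : ℝ) / 3)) ∂μ) < ⊤ := by
  set K := C * 2 ^ ((-(2 : ℝ) / 3 + 4 / 3) / 2 - 1) * Gamma ((-(2 : ℝ) / 3 + 4 / 3) / 2)
  have hmoment : ∀ t ∈ Ioo (0 : ℝ) 1, ∫⁻ ω, ENNReal.ofReal ((ρ t ω) ^ (-(2 : ℝ) / 3)) ∂μ
      = ENNReal.ofReal K * ENNReal.ofReal (t ^ ((2 : ℝ) / 3 - 1) * (1 - t) ^ ((2 : ℝ) / 3 - 1)) := by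
    intro t ht
    have h1t : 0 < 1 - t := sub_pos.2 ht.2
    have h := lintegral_rpow_mul_besselBridgeDensity (p := -(2 : ℝ) / 3) (δ := 4 / 3) (by norm_num)
      (mul_pos ht.1 h1t) hC.le
    rw [show -(4 / 3 : ℝ) / 2 = -2 / 3 by norm_num] at h
    rw [hdens t ht, h, ← ENNReal.ofReal_mul (by positivity), mul_rpow ht.1.le h1t.le]
    congr 4 <;> norm_num
  calc _ = ∫⁻ t in Ioo (0 : ℝ) 1,
        ENNReal.ofReal K * ENNReal.ofReal (t ^ ((2 : ℝ) / 3 - 1) * (1 - t) ^ ((2 : ℝ) / 3 - 1)) :=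
        setLIntegral_congr_fun measurableSet_Ioo hmoment
    _ = ENNReal.ofReal K * ENNReal.ofReal (beta (2 / 3) (2 / 3)) := by
        rw [lintegral_const_mul' _ _ ENNReal.ofReal_ne_top,
          lintegral_rpow_mul_one_sub_rpow (by norm_num) (by norm_num)]
    _ < ⊤ := ENNReal.mul_lt_top ENNReal.ofReal_lt_top ENNReal.ofReal_lt_top

/-- For a Bessel bridge `ρ` of dimension `δ = 4/3` from `0` to `0` on `[0,1]` (encoded via
the explicit density `C x^{δ-1} (t(1-t))^{-δ/2} exp(-x²/(2t(1-t)))` of `ρ_t` for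
`t ∈ (0,1)`), one has `∫_0^1 E[ρ_t^{-2/3}] dt < ∞`. -/
theorem stmt9 {Ω : Type*} [MeasurableSpace Ω] (μ : Measure Ω) [IsProbabilityMeasure μ]
    (ρ : ℝ → Ω → ℝ) (C : ℝ) (hC : 0 < C)
    (hdens : ∀ t ∈ Set.Ioo (0 : ℝ) 1,
      ∫⁻ ω, ENNReal.ofReal ((ρ t ω) ^ (-(2 : ℝ) / 3)) ∂μ
        = ∫⁻ x in Set.Ioi (0 : ℝ), ENNReal.ofReal (x ^ (-(2 : ℝ) / 3) *
            (C * x ^ ((4 : ℝ) / 3 - 1) * (t * (1 - t)) ^ (-(2 : ℝ) / 3) *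
              Real.exp (-(x ^ 2) / (2 * (t * (1 - t)))))) ) :
    ∫⁻ t in Set.Ioo (0 : ℝ) 1, (∫⁻ ω, ENNReal.ofReal ((ρ t ω) ^ (-(2 : ℝ) / 3)) ∂μ) < ⊤ :=
  stmt9_general μ ρ C hC hdens
end

section
/- Let s ∈ ℕ and let real numbers u_1,...,u_s be given. Define F = max_{j≤s} |Σ_{i=1}^j (-1)^{i-1} u_i|, F₁ = max_{j ≤ ⌊s/2⌋+1} |Σ_{i=1}^j (-1)^{i-1} u_i| and F̃₁ = max_{j ≤ ⌊s/2⌋+1} |Σ_{i=1}^{j-1} (-1)^{i-1}(-u_{s+1-i})|. Then F ≤ 3·max(F₁, F̃₁). -/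
/-!
Write `S j` for the `j`-th alternating partial sum. Up to the sign `(-1)^s`, the reversed sums in
`F̃₁` are the tail sums `S s - S (s - k)`, so `F₁` controls `S` on the first half and `F̃₁`
controls `S s - S j` on the second half. The two halves overlap at `j = s - ⌊s/2⌋`, whence
`|S s| ≤ F₁ + F̃₁`, and every `S j` in the second half is within `F̃₁` of `S s`.
-/

open Finset

theorem Finset.sum_range_sub_sum_range_sub {M : Type*} [AddCommGroup M] (f : ℕ → M) {s k : ℕ}
    (hk : k ≤ s) :
    ∑ i ∈ range s, f i - ∑ i ∈ range (s - k), f i = ∑ i ∈ range k, f (s - 1 - i) := by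
  obtain ⟨t, rfl⟩ := Nat.exists_eq_add_of_le' hk
  rw [Nat.add_sub_cancel, sum_range_add, add_sub_cancel_left, ← sum_range_reflect]
  refine sum_congr rfl fun i hi => ?_
  have : i < k := mem_range.mp hi
  congr 1
  omega

theorem neg_one_pow_sub_one_sub {R : Type*} [Ring R] {s i : ℕ} (hi : i < s) :
    (-1 : R) ^ (s - 1 - i) = (-1) ^ s * ((-1) ^ i * -1) := by
  have hs : s = (s - 1 - i) + (i + 1) := by omega
  conv_rhs => rw [hs, pow_add, ← pow_succ, mul_assoc, ← pow_add, ← two_mul, pow_mul]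
  simp

theorem alternating_sum_sub_eq_reversed {R : Type*} [CommRing R] (u : ℕ → R) {s k : ℕ}
    (hk : k ≤ s) :
    ∑ i ∈ range s, (-1 : R) ^ i * u i - ∑ i ∈ range (s - k), (-1 : R) ^ i * u i
      = (-1 : R) ^ s * ∑ i ∈ range k, (-1 : R) ^ i * (-(u (s - 1 - i))) := by
  rw [sum_range_sub_sum_range_sub _ hk, mul_sum]
  refine sum_congr rfl fun i hi => ?_
  rw [neg_one_pow_sub_one_sub (by have := mem_range.mp hi; omega)]
  ring

theorem abs_le_add_two_mul_of_head_of_tail (S : ℕ → ℝ) {s m : ℕ} {A B : ℝ} (hsm : s ≤ 2 * m + 1)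
    (head : ∀ j ≤ m + 1, |S j| ≤ A) (tail : ∀ j ≤ s, s ≤ j + m → |S s - S j| ≤ B)
    {j : ℕ} (hj : j ≤ s) : |S j| ≤ A + 2 * B := by
  have hB : 0 ≤ B := (abs_nonneg _).trans (tail s le_rfl (by omega))
  have hSs : |S s| ≤ A + B := calc
    |S s| = |S (s - m) + (S s - S (s - m))| := by rw [add_sub_cancel]
    _ ≤ |S (s - m)| + |S s - S (s - m)| := abs_add_le _ _
    _ ≤ A + B := add_le_add (head _ (by omega)) (tail _ (by omega) (by omega))
  rcases le_or_gt j (m + 1) with hjm | hjm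
  · linarith [head j hjm]
  · have := abs_sub_abs_le_abs_sub (S j) (S s)
    rw [abs_sub_comm] at this
    linarith [tail j hj (by omega)]

/-- Inequality (5.82): with `S_j = ∑_{i=1}^j (-1)^{i-1} u_i`,
`F = max_{j ≤ s} |S_j|`, `F₁ = max_{j ≤ ⌊s/2⌋+1} |S_j|` and
`F̃₁ = max_{j ≤ ⌊s/2⌋+1} |∑_{i=1}^{j-1} (-1)^{i-1}(-u_{s+1-i})|`, one has
`F ≤ 3 max (F₁, F̃₁)`.  (Increments are indexed `u 0, …, u (s-1)` here.) -/
theorem stmt19 (s : ℕ) (u : ℕ → ℝ) :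
    (Finset.range (s + 1)).sup' Finset.nonempty_range_add_one
        (fun j => |∑ i ∈ Finset.range j, (-1 : ℝ) ^ i * u i|)
      ≤ 3 * max
        ((Finset.range (s / 2 + 2)).sup' Finset.nonempty_range_add_one
          (fun j => |∑ i ∈ Finset.range j, (-1 : ℝ) ^ i * u i|))
        ((Finset.range (s / 2 + 2)).sup' Finset.nonempty_range_add_one
          (fun j => |∑ i ∈ Finset.range (j - 1), (-1 : ℝ) ^ i * (-(u (s - 1 - i)))|)) := by
  set S : ℕ → ℝ := fun j => ∑ i ∈ range j, (-1 : ℝ) ^ i * u i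
  set F₁ := (range (s / 2 + 2)).sup' nonempty_range_add_one (fun j => |S j|)
  set F₂ := (range (s / 2 + 2)).sup' nonempty_range_add_one
    (fun j => |∑ i ∈ range (j - 1), (-1 : ℝ) ^ i * (-(u (s - 1 - i)))|)
  have head (j : ℕ) (hj : j ≤ s / 2 + 1) : |S j| ≤ F₁ :=
    le_sup' (fun j => |S j|) (mem_range.mpr (Nat.lt_succ_of_le hj))
  have tail (j : ℕ) (hj : j ≤ s) (hjs : s ≤ j + s / 2) : |S s - S j| ≤ F₂ := calc
    |S s - S j| = |S s - S (s - (s - j))| := by rw [Nat.sub_sub_self hj]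
    _ = |∑ i ∈ range (s - j), (-1 : ℝ) ^ i * (-(u (s - 1 - i)))| := by
      rw [alternating_sum_sub_eq_reversed u (Nat.sub_le s j), abs_mul, abs_neg_one_pow, one_mul]
    _ ≤ F₂ := le_sup' (fun j => |∑ i ∈ range (j - 1), (-1 : ℝ) ^ i * (-(u (s - 1 - i)))|)
      (mem_range.mpr (by omega : s - j + 1 < s / 2 + 2))
  have hF₂ : 0 ≤ F₂ := (abs_nonneg _).trans (tail s le_rfl (by omega))
  refine sup'_le _ _ fun j hj => ?_
  have := abs_le_add_two_mul_of_head_of_tail S (by omega) head tail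
    (Nat.lt_succ_iff.mp (mem_range.mp hj))
  linarith [le_max_left F₁ F₂, le_max_right F₁ F₂]
end
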